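/- Let S ∈ ℚ⟨⟨A⟩⟩ be a rational series with a finite set of coefficients. If S is completely reducible, then S is a ℚ-linear combination of birecurrent series. -/
import Mathlib

namespace Birec

variable {A : Type*}

/-- The left quotient `u⁻¹S = {v | u v ∈ S}`. -/
def leftQuot (S : Set (List A)) (u : List A) : Set (List A) := {v | u ++ v ∈ S}

/-- A language is recognizable iff it has finitely many left quotients (Nerode). -/
def Recognizable (S : Set (List A)) : Prop := (Set.range (leftQuot S)).Finite

/-- The reversal `S̃` of a language. -/
def langRev (S : Set (List A)) : Set (List A) := {w | w.reverse ∈ S}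

/-- A recognizable set is recurrent if its minimal automaton (whose states are the
nonempty left quotients) is strongly connected. -/
def Recurrent (S : Set (List A)) : Prop :=
  Recognizable S ∧
    ∀ u v : List A, (leftQuot S u).Nonempty → (leftQuot S v).Nonempty →
      ∃ w : List A, leftQuot S (u ++ w) = leftQuot S v

/-- A set is birecurrent if it is recurrent together with its reversal. -/
def Birecurrent (S : Set (List A)) : Prop := Recurrent S ∧ Recurrent (langRev S)

/-- A set is dense if every word is a factor of one of its words. -/
def LangDense (S : Set (List A)) : Prop := ∀ v : List A, ∃ u w : List A, u ++ v ++ w ∈ S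

end Birec
namespace Birec

variable {A : Type*}

/-- The characteristic series of a language, as a function `A* → ℚ`. -/
noncomputable def charFun (S : Set (List A)) : List A → ℚ := S.indicator 1

/-- The shift operator `τ ↦ τ · u`, where `(τ · u)(v) = τ(u v)`; this is the linear
action underlying the syntactic representation. -/
def shiftOp (u : List A) : (List A → ℚ) →ₗ[ℚ] (List A → ℚ) where
  toFun τ := fun v => τ (u ++ v)
  map_add' := fun _ _ => rfl
  map_smul' := fun _ _ => rfl

/-- The syntactic space of a series `σ`: the subspace of `ℚ⟨⟨A⟩⟩` spanned by the
series `σ · u` for `u ∈ A*`. -/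
def synSpace (σ : List A → ℚ) : Submodule ℚ (List A → ℚ) :=
  Submodule.span ℚ (Set.range fun u : List A => shiftOp u σ)

/-- A subspace is invariant if it is stable under all shift operators. -/
def InvariantSub (W : Submodule ℚ (List A → ℚ)) : Prop :=
  ∀ τ ∈ W, ∀ u : List A, shiftOp u τ ∈ W

/-- An invariant subspace is irreducible if it is nonzero and has no nontrivial
invariant subspace. -/
def IrreducibleSub (W : Submodule ℚ (List A → ℚ)) : Prop :=
  W ≠ ⊥ ∧ ∀ W' : Submodule ℚ (List A → ℚ), W' ≤ W → InvariantSub W' → W' = ⊥ ∨ W' = W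

/-- A series is completely reducible if its syntactic space is a direct sum of
invariant irreducible subspaces (equivalently, its syntactic representation is a
direct sum of irreducible representations). -/
def CompletelyReducibleSeries (σ : List A → ℚ) : Prop :=
  ∃ (n : ℕ) (W : Fin n → Submodule ℚ (List A → ℚ)),
    (∀ i, W i ≤ synSpace σ ∧ InvariantSub (W i) ∧ IrreducibleSub (W i)) ∧
    iSupIndep W ∧ (⨆ i, W i) = synSpace σ

/-- A language is completely reducible if its characteristic series is. -/
noncomputable def CompletelyReducibleLang (S : Set (List A)) : Prop :=
  CompletelyReducibleSeries (charFun S)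

/-- The rank of the element `ψ_σ(u)` of the syntactic monoid, i.e. the dimension of the
image of the syntactic space under the shift by `u`. -/
noncomputable def psiRank (σ : List A → ℚ) (u : List A) : ℕ :=
  Module.finrank ℚ ↥(Submodule.map (shiftOp u) (synSpace σ))

/-- `u` induces an element of minimal nonzero rank of the syntactic monoid. -/
def IsMinNonzeroPsiRank (σ : List A → ℚ) (u : List A) : Prop :=
  psiRank σ u ≠ 0 ∧ ∀ v : List A, psiRank σ v ≠ 0 → psiRank σ u ≤ psiRank σ v

/-- The eventual kernel `EK(S)`: the intersection (inside the syntactic space) of the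
kernels of all elements of minimal nonzero rank of the syntactic monoid. -/
noncomputable def EK (S : Set (List A)) : Submodule ℚ (List A → ℚ) :=
  synSpace (charFun S) ⊓
    ⨅ u ∈ {u : List A | IsMinNonzeroPsiRank (charFun S) u}, LinearMap.ker (shiftOp u)

/-- The eventual range `ER(S)`: the subspace spanned by the images of all elements of
minimal nonzero rank of the syntactic monoid. -/
noncomputable def ER (S : Set (List A)) : Submodule ℚ (List A → ℚ) :=
  ⨆ u ∈ {u : List A | IsMinNonzeroPsiRank (charFun S) u},
    Submodule.map (shiftOp u) (synSpace (charFun S))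

end Birec
namespace Birec

variable {A : Type*}

/-- A series is rational with a finite set of coefficients iff it has finitely many
left quotients `u⁻¹σ` (Nerode criterion for series). -/
def SeriesRecognizable (σ : List A → ℚ) : Prop :=
  (Set.range fun u : List A => (shiftOp u σ : List A → ℚ)).Finite

/-- A rational series with a finite set of coefficients is recurrent if its minimal
deterministic automaton with scalar output function, whose states are the nonzero
quotients `u⁻¹σ`, is strongly connected. -/
def SeriesRecurrent (σ : List A → ℚ) : Prop :=
  SeriesRecognizable σ ∧
    ∀ u v : List A, shiftOp u σ ≠ 0 → shiftOp v σ ≠ 0 →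
      ∃ w : List A, shiftOp (u ++ w) σ = shiftOp v σ

/-- The reversal of a series. -/
def seriesRev (σ : List A → ℚ) : List A → ℚ := fun w => σ w.reverse

/-- A series is birecurrent if both it and its reversal are recurrent. -/
def SeriesBirecurrent (σ : List A → ℚ) : Prop :=
  SeriesRecurrent σ ∧ SeriesRecurrent (seriesRev σ)

end Birec

open Birec

section AuxProof

variable {A : Type*}

lemma shiftOp_apply (u : List A) (τ : List A → ℚ) (v : List A) : shiftOp u τ v = τ (u ++ v) := rfl

lemma shiftOp_shiftOp (u v : List A) (τ : List A → ℚ) :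
    shiftOp u (shiftOp v τ) = shiftOp (v ++ u) τ := by
  funext w; simp [shiftOp_apply, List.append_assoc]

lemma shiftOp_nil (τ : List A → ℚ) : shiftOp ([] : List A) τ = τ := rfl

lemma mem_synSpace_self (τ : List A → ℚ) : τ ∈ synSpace τ :=
  Submodule.subset_span ⟨[], rfl⟩

lemma shiftOp_mem_synSpace (u : List A) (τ : List A → ℚ) : shiftOp u τ ∈ synSpace τ :=
  Submodule.subset_span ⟨u, rfl⟩

lemma invariant_synSpace (τ : List A → ℚ) : InvariantSub (synSpace τ) := by
  intro f hf u
  induction hf using Submodule.span_induction with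
  | mem x hx =>
      obtain ⟨v, rfl⟩ := hx
      rw [shiftOp_shiftOp]; exact shiftOp_mem_synSpace _ _
  | zero => simpa using (synSpace τ).zero_mem
  | add x y _ _ hx hy => rw [map_add]; exact Submodule.add_mem _ hx hy
  | smul c x _ hx => rw [map_smul]; exact Submodule.smul_mem _ _ hx

lemma synSpace_le_of_mem {W : Submodule ℚ (List A → ℚ)} (hW : InvariantSub W)
    {τ : List A → ℚ} (hτ : τ ∈ W) : synSpace τ ≤ W := by
  rw [synSpace, Submodule.span_le]
  rintro x ⟨u, rfl⟩
  exact hW τ hτ u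

lemma invariantSub_span {s : Set (List A → ℚ)}
    (h : ∀ f ∈ s, ∀ u : List A, shiftOp u f ∈ Submodule.span ℚ s) :
    InvariantSub (Submodule.span ℚ s) := by
  intro f hf u
  induction hf using Submodule.span_induction with
  | mem x hx => exact h x hx u
  | zero => simpa using (Submodule.span ℚ s).zero_mem
  | add x y _ _ hx hy => rw [map_add]; exact Submodule.add_mem _ hx hy
  | smul c x _ hx => rw [map_smul]; exact Submodule.smul_mem _ _ hx

/-- Cyclic form of irreducibility of the syntactic representation. -/
def IrrSyn (τ : List A → ℚ) : Prop :=
  ∀ g ∈ synSpace τ, g ≠ 0 → synSpace g = synSpace τ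

lemma finite_range_factor {α β γ : Type*} {f : α → β} {g : α → γ}
    (hf : (Set.range f).Finite) (h : ∀ a b, f a = f b → g a = g b) :
    (Set.range g).Finite := by
  haveI := hf.to_subtype
  have hsub : Set.range g ⊆ Set.range (fun b : Set.range f => g b.2.choose) := by
    rintro _ ⟨a, rfl⟩
    exact ⟨⟨f a, ⟨a, rfl⟩⟩, h _ _ (Exists.choose_spec (⟨a, rfl⟩ : ∃ x, f x = f a))⟩
  exact (Set.finite_range _).subset hsub

/-! ### Reversal and right shifts -/

lemma seriesRev_seriesRev (τ : List A → ℚ) : seriesRev (seriesRev τ) = τ := by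
  funext w; simp [seriesRev]

lemma seriesRev_zero : seriesRev (0 : List A → ℚ) = 0 := rfl

lemma seriesRev_ne_zero {τ : List A → ℚ} (h : τ ≠ 0) : seriesRev τ ≠ 0 := by
  intro h0
  apply h
  rw [← seriesRev_seriesRev τ, h0, seriesRev_zero]

/-- Reversal as a linear map. -/
def revLin : (List A → ℚ) →ₗ[ℚ] (List A → ℚ) where
  toFun := seriesRev
  map_add' := fun _ _ => rfl
  map_smul' := fun _ _ => rfl

/-- The right shift of a series. -/
def rshift (u : List A) (τ : List A → ℚ) : List A → ℚ := fun v => τ (v ++ u)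

lemma shiftOp_rshift (x u : List A) (τ : List A → ℚ) :
    shiftOp x (rshift u τ) = rshift u (shiftOp x τ) := by
  funext v; simp [rshift, shiftOp_apply, List.append_assoc]

lemma rshift_zero (u : List A) : rshift u (0 : List A → ℚ) = 0 := rfl

lemma seriesRev_shiftOp_seriesRev (v : List A) (q : List A → ℚ) :
    seriesRev (shiftOp v (seriesRev q)) = rshift v.reverse q := by
  funext w
  simp [seriesRev, shiftOp_apply, rshift, List.reverse_append]

lemma recognizable_rshift {τ : List A → ℚ} (h : SeriesRecognizable τ) (u : List A) :
    SeriesRecognizable (rshift u τ) := by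
  refine finite_range_factor h (fun a b hab => ?_)
  rw [shiftOp_rshift, shiftOp_rshift, hab]

lemma recurrent_rshift {τ : List A → ℚ} (h : SeriesRecurrent τ) (u : List A) :
    SeriesRecurrent (rshift u τ) := by
  refine ⟨recognizable_rshift h.1 u, fun x y hx hy => ?_⟩
  have hx' : shiftOp x τ ≠ 0 := by
    intro h0; apply hx; rw [shiftOp_rshift, h0, rshift_zero]
  have hy' : shiftOp y τ ≠ 0 := by
    intro h0; apply hy; rw [shiftOp_rshift, h0, rshift_zero]
  obtain ⟨w, hw⟩ := h.2 x y hx' hy'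
  exact ⟨w, by rw [shiftOp_rshift, shiftOp_rshift, hw]⟩

/-- The reversal of a recognizable series is recognizable. -/
lemma seriesRecognizable_rev {τ : List A → ℚ} (hrec : SeriesRecognizable τ) :
    SeriesRecognizable (seriesRev τ) := by
  classical
  set s := Set.range fun u : List A => (shiftOp u τ : List A → ℚ) with hs
  haveI := hrec.to_subtype
  set E : Set ℚ := (fun h : List A → ℚ => h []) '' s with hE
  set G : List A → (s → ℚ) := fun v g => (g : List A → ℚ) v.reverse with hG
  have hGfin : (Set.range G).Finite := by
    have hEfin : E.Finite := hrec.image _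
    refine Set.Finite.subset (Set.Finite.pi (fun _ : s => hEfin)) ?_
    rintro _ ⟨v, rfl⟩
    rw [Set.mem_pi]
    rintro ⟨g, hg⟩ -
    obtain ⟨u, hu⟩ := hg
    refine ⟨shiftOp (u ++ v.reverse) τ, ⟨u ++ v.reverse, rfl⟩, ?_⟩
    subst hu
    simp [hG, shiftOp_apply, List.append_assoc]
  refine finite_range_factor hGfin (fun a b hab => ?_)
  funext w
  have h1 := congrFun hab ⟨shiftOp w.reverse τ, ⟨w.reverse, rfl⟩⟩
  simpa [hG, shiftOp_apply, seriesRev, List.reverse_append] using h1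

/-! ### Bottom states of the minimal automaton -/

/-- `q` is a state of the automaton of `τ` lying in a bottom strongly connected part. -/
def IsBotState (τ q : List A → ℚ) : Prop :=
  (∃ u, shiftOp u τ = q) ∧ ∀ w, shiftOp w q ≠ 0 → ∃ w', shiftOp w' (shiftOp w q) = q

lemma state_shifts_finite {τ q : List A → ℚ} (hrec : SeriesRecognizable τ)
    (hq : ∃ u, shiftOp u τ = q) : (Set.range fun w => shiftOp w q).Finite := by
  obtain ⟨u, rfl⟩ := hq
  refine hrec.subset ?_
  rintro _ ⟨w, rfl⟩
  exact ⟨u ++ w, (shiftOp_shiftOp w u τ).symm⟩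

lemma IsBotState.recurrent {τ q : List A → ℚ} (hrec : SeriesRecognizable τ)
    (h : IsBotState τ q) : SeriesRecurrent q := by
  refine ⟨state_shifts_finite hrec h.1, fun x y hx hy => ?_⟩
  obtain ⟨w', hw'⟩ := h.2 x hx
  refine ⟨w' ++ y, ?_⟩
  have h1 : shiftOp (x ++ (w' ++ y)) q = shiftOp y (shiftOp w' (shiftOp x q)) := by
    rw [shiftOp_shiftOp, shiftOp_shiftOp]
  rw [h1, hw']

lemma exists_bot_reach {τ : List A → ℚ} (hrec : SeriesRecognizable τ) :
    ∀ q, (∃ u, shiftOp u τ = q) → q ≠ 0 →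
      ∃ p w, shiftOp w q = p ∧ p ≠ 0 ∧ IsBotState τ p := by
  have key : ∀ n q, (Set.range fun w => shiftOp w q).ncard ≤ n →
      (∃ u, shiftOp u τ = q) → q ≠ 0 →
      ∃ p w, shiftOp w q = p ∧ p ≠ 0 ∧ IsBotState τ p := by
    intro n
    induction n with
    | zero =>
        intro q hcard hst hq
        exfalso
        have hfin := state_shifts_finite hrec hst
        have hpos : 0 < (Set.range fun w => shiftOp w q).ncard :=
          (Set.ncard_pos hfin).mpr ⟨q, ⟨[], shiftOp_nil q⟩⟩
        omega
    | succ n ih =>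
        intro q hcard hst hq
        by_cases hb : ∀ w, shiftOp w q ≠ 0 → ∃ w', shiftOp w' (shiftOp w q) = q
        · exact ⟨q, [], shiftOp_nil q, hq, hst, hb⟩
        · push_neg at hb
          obtain ⟨w, hw0, hnr⟩ := hb
          set q' := shiftOp w q with hq'
          have hst' : ∃ u, shiftOp u τ = q' := by
            obtain ⟨u, rfl⟩ := hst
            exact ⟨u ++ w, (shiftOp_shiftOp w u τ).symm⟩
          have hsub : (Set.range fun x => shiftOp x q') ⊆ (Set.range fun x => shiftOp x q) := by
            rintro _ ⟨x, rfl⟩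
            exact ⟨w ++ x, (shiftOp_shiftOp x w q).symm⟩
          have hqq : q ∉ Set.range fun x => shiftOp x q' := by
            rintro ⟨x, hx⟩
            exact hnr x hx
          have hss : (Set.range fun x => shiftOp x q') ⊂ (Set.range fun x => shiftOp x q) :=
            ⟨hsub, fun hle => hqq (hle ⟨[], shiftOp_nil q⟩)⟩
          have hlt := Set.ncard_lt_ncard hss (state_shifts_finite hrec hst)
          obtain ⟨p, w', hw', hp, hbot⟩ := ih q' (by omega) hst' hw0
          refine ⟨p, w ++ w', ?_, hp, hbot⟩
          rw [← shiftOp_shiftOp, ← hq', hw']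
  exact fun q => key _ q le_rfl

lemma bottom_decomp {τ : List A → ℚ} (hrec : SeriesRecognizable τ) (hirr : IrrSyn τ)
    (hτ : τ ≠ 0) :
    τ ∈ Submodule.span ℚ {q : List A → ℚ |
      (∃ u, shiftOp u τ = q) ∧ q ≠ 0 ∧ SeriesRecurrent q} := by
  set B : Set (List A → ℚ) := {q | IsBotState τ q ∧ q ≠ 0} with hB
  have hBinv : InvariantSub (Submodule.span ℚ B) := by
    refine invariantSub_span (fun q hq u => ?_)
    obtain ⟨⟨⟨u₀, hu₀⟩, hbot⟩, hq0⟩ := hq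
    by_cases h0 : shiftOp u q = 0
    · rw [h0]; exact Submodule.zero_mem _
    · refine Submodule.subset_span ⟨⟨⟨u₀ ++ u, ?_⟩, ?_⟩, h0⟩
      · rw [← shiftOp_shiftOp, hu₀]
      · intro w hw
        have hw' : shiftOp (u ++ w) q ≠ 0 := by
          rw [← shiftOp_shiftOp]; exact hw
        obtain ⟨w', hw'⟩ := hbot (u ++ w) hw'
        refine ⟨w' ++ u, ?_⟩
        have h1 : shiftOp (w' ++ u) (shiftOp w (shiftOp u q)) =
            shiftOp u (shiftOp w' (shiftOp (u ++ w) q)) := by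
          rw [shiftOp_shiftOp, shiftOp_shiftOp, shiftOp_shiftOp, shiftOp_shiftOp]
          simp [List.append_assoc]
        rw [h1, hw']
  obtain ⟨p₀, w₀, hw₀, hp₀, hbot₀⟩ := exists_bot_reach hrec τ ⟨[], shiftOp_nil τ⟩ hτ
  have hp₀B : p₀ ∈ Submodule.span ℚ B := Submodule.subset_span ⟨hbot₀, hp₀⟩
  have hp₀syn : p₀ ∈ synSpace τ := by
    obtain ⟨u, hu⟩ := hbot₀.1
    rw [← hu]; exact shiftOp_mem_synSpace u τ
  have h1 : synSpace p₀ ≤ Submodule.span ℚ B := synSpace_le_of_mem hBinv hp₀B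
  have h2 : synSpace p₀ = synSpace τ := hirr p₀ hp₀syn hp₀
  have hτB : τ ∈ Submodule.span ℚ B := h1 (h2 ▸ mem_synSpace_self τ)
  refine Submodule.span_mono ?_ hτB
  rintro q ⟨hbot, hq0⟩
  exact ⟨hbot.1, hq0, hbot.recurrent hrec⟩

/-! ### Duality: irreducibility passes to the reversal -/

/-- The family of linear functionals implementing the Hankel pairing. -/
noncomputable def pairFun (d : List A →₀ ℚ) (x : List A) : (List A → ℚ) →ₗ[ℚ] ℚ where
  toFun f := d.sum fun v a => a * f (x.reverse ++ v.reverse)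
  map_add' f f' := by
    simp only [Finsupp.sum, Pi.add_apply, mul_add, Finset.sum_add_distrib]
  map_smul' r f := by
    simp only [Finsupp.sum, Pi.smul_apply, smul_eq_mul, RingHom.id_apply, Finset.mul_sum]
    exact Finset.sum_congr rfl (fun _ _ => by ring)

lemma pairFun_apply (d : List A →₀ ℚ) (x : List A) (f : List A → ℚ) :
    pairFun d x f = d.sum fun v a => a * f (x.reverse ++ v.reverse) := rfl

lemma pairFun_shift (d : List A →₀ ℚ) (x w : List A) (f : List A → ℚ) :
    pairFun d x (shiftOp w f) = pairFun d (x ++ w.reverse) f := by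
  simp only [pairFun_apply]
  refine Finset.sum_congr rfl (fun v _ => ?_)
  simp [shiftOp_apply, List.reverse_append, List.append_assoc]

lemma irrSyn_rev {τ : List A → ℚ} (hrec : SeriesRecognizable τ) (hirr : IrrSyn τ) :
    IrrSyn (seriesRev τ) := by
  classical
  intro g hg hg0
  refine le_antisymm (synSpace_le_of_mem (invariant_synSpace _) hg) ?_
  obtain ⟨d, hd⟩ := Finsupp.mem_span_range_iff_exists_finsupp.mp hg
  -- hd : (d.sum fun v a => a • shiftOp v (seriesRev τ)) = g
  -- key evaluation identity: pairFun d x (shiftOp u τ) computed from g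
  have heval : ∀ x u : List A,
      pairFun d x (shiftOp u τ) = (shiftOp x g) u.reverse := by
    intro x u
    rw [← hd, pairFun_apply]
    have h1 : (shiftOp x (d.sum fun v a => a • shiftOp v (seriesRev τ))) u.reverse
        = d.sum fun v a => a * seriesRev τ (v ++ (x ++ u.reverse)) := by
      rw [map_finsuppSum]
      rw [Finsupp.sum, Finsupp.sum, Finset.sum_apply]
      refine Finset.sum_congr rfl (fun v _ => ?_)
      simp [shiftOp_apply]
    rw [h1]
    refine Finset.sum_congr rfl (fun v _ => ?_)
    simp [seriesRev, shiftOp_apply, List.reverse_append, List.append_assoc]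
  set V := synSpace τ with hV
  haveI : FiniteDimensional ℚ V := FiniteDimensional.span_of_finite ℚ hrec
  set Φ : Module.Dual ℚ V →ₗ[ℚ] (List A → ℚ) :=
    { toFun := fun ψ => fun v => ψ ⟨shiftOp v.reverse τ, shiftOp_mem_synSpace _ _⟩
      map_add' := fun _ _ => rfl
      map_smul' := fun _ _ => rfl } with hΦ
  set ψf : List A → Module.Dual ℚ V := fun x => (pairFun d x).domRestrict V with hψf
  have hΦψf : ∀ x, Φ (ψf x) = shiftOp x g := by
    intro x
    funext v
    have : Φ (ψf x) v = pairFun d x (shiftOp v.reverse τ) := rfl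
    rw [this, heval x v.reverse, List.reverse_reverse]
  set D := Submodule.span ℚ (Set.range ψf) with hD
  -- the span of the functionals is everything
  have hDtop : D = ⊤ := by
    have hco : D.dualCoannihilator = ⊥ := by
      rw [eq_bot_iff]
      rintro f hf
      rw [Submodule.mem_dualCoannihilator] at hf
      rw [Submodule.mem_bot]
      by_contra hf0
      have hker : ∀ x, pairFun d x (f : List A → ℚ) = 0 := fun x =>
        hf (ψf x) (Submodule.subset_span ⟨x, rfl⟩)
      set W₀ : Submodule ℚ (List A → ℚ) :=
        V ⊓ ⨅ x : List A, LinearMap.ker (pairFun d x) with hW₀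
      have hfW : (f : List A → ℚ) ∈ W₀ :=
        Submodule.mem_inf.mpr ⟨f.2, Submodule.mem_iInf _ |>.mpr
          (fun x => LinearMap.mem_ker.mpr (hker x))⟩
      have hWinv : InvariantSub W₀ := by
        rintro z hz u
        obtain ⟨hz1, hz2⟩ := Submodule.mem_inf.mp hz
        refine Submodule.mem_inf.mpr ⟨invariant_synSpace τ z hz1 u, ?_⟩
        rw [Submodule.mem_iInf]
        intro x
        rw [LinearMap.mem_ker, pairFun_shift]
        exact LinearMap.mem_ker.mp ((Submodule.mem_iInf _).mp hz2 (x ++ u.reverse))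
      have hfne : (f : List A → ℚ) ≠ 0 := by
        intro h0
        exact hf0 (Subtype.coe_injective (by simpa using h0))
      have hVW : V ≤ W₀ := by
        have h2 : synSpace (f : List A → ℚ) = V := hirr _ f.2 hfne
        rw [← h2]
        exact synSpace_le_of_mem hWinv hfW
      obtain ⟨w₀, hw₀⟩ : ∃ w₀, g w₀ ≠ 0 := by
        by_contra hall
        push_neg at hall
        exact hg0 (funext hall)
      have hmem : shiftOp w₀.reverse τ ∈ W₀ := hVW (shiftOp_mem_synSpace _ _)
      have hzero : pairFun d [] (shiftOp w₀.reverse τ) = 0 :=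
        LinearMap.mem_ker.mp ((Submodule.mem_iInf _).mp (Submodule.mem_inf.mp hmem).2 [])
      rw [heval [] w₀.reverse, List.reverse_reverse] at hzero
      exact hw₀ (by simpa [shiftOp_nil] using hzero)
    have h1 := Subspace.finrank_add_finrank_dualCoannihilator_eq D
    rw [hco, finrank_bot] at h1
    apply Submodule.eq_top_of_finrank_eq
    rw [Subspace.dual_finrank_eq]
    omega
  -- now conclude: every generator of synSpace (seriesRev τ) is in synSpace g
  rw [synSpace, Submodule.span_le]
  rintro _ ⟨v₀, rfl⟩
  show shiftOp v₀ (seriesRev τ) ∈ synSpace g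
  set ψ₀ : Module.Dual ℚ V := (LinearMap.proj v₀.reverse).domRestrict V with hψ₀
  have hΦψ₀ : Φ ψ₀ = shiftOp v₀ (seriesRev τ) := by
    funext v
    show (shiftOp v.reverse τ) v₀.reverse = shiftOp v₀ (seriesRev τ) v
    simp [shiftOp_apply, seriesRev, List.reverse_append]
  rw [← hΦψ₀]
  have hψ₀D : ψ₀ ∈ D := hDtop ▸ Submodule.mem_top
  have hmap : Submodule.map Φ D ≤ synSpace g := by
    rw [hD, Submodule.map_span, Submodule.span_le]
    rintro _ ⟨_, ⟨x, rfl⟩, rfl⟩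
    rw [hΦψf x]
    exact shiftOp_mem_synSpace x g
  exact hmap ⟨ψ₀, hψ₀D, rfl⟩

/-! ### Main step: irreducible series lie in the span of birecurrent series -/

lemma mem_birec_span (τ : List A → ℚ) (hrec : SeriesRecognizable τ) (hirr : IrrSyn τ) :
    τ ∈ Submodule.span ℚ {T : List A → ℚ | SeriesBirecurrent T} := by
  by_cases hτ : τ = 0
  · rw [hτ]; exact Submodule.zero_mem _
  have h1 := bottom_decomp hrec hirr hτ
  refine Submodule.span_le.mpr ?_ h1
  rintro q ⟨⟨u, hu⟩, hq0, hqrec⟩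
  show q ∈ Submodule.span ℚ {T : List A → ℚ | SeriesBirecurrent T}
  have hqrecog : SeriesRecognizable q := hqrec.1
  have hqsyn : q ∈ synSpace τ := hu ▸ shiftOp_mem_synSpace u τ
  have hq : synSpace q = synSpace τ := hirr q hqsyn hq0
  have hirrq : IrrSyn q := by
    intro h hh hh0
    rw [hq] at hh ⊢
    exact hirr h hh hh0
  have hrevrec : SeriesRecognizable (seriesRev q) := seriesRecognizable_rev hqrecog
  have hrevirr : IrrSyn (seriesRev q) := irrSyn_rev hqrecog hirrq
  have hrev0 : seriesRev q ≠ 0 := seriesRev_ne_zero hq0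
  have h2 := bottom_decomp hrevrec hrevirr hrev0
  have h3 : q ∈ Submodule.map revLin (Submodule.span ℚ {p : List A → ℚ |
      (∃ v, shiftOp v (seriesRev q) = p) ∧ p ≠ 0 ∧ SeriesRecurrent p}) :=
    ⟨seriesRev q, h2, seriesRev_seriesRev q⟩
  rw [Submodule.map_span] at h3
  refine Submodule.span_le.mpr ?_ h3
  rintro _ ⟨p, ⟨⟨v, hv⟩, hp0, hprec⟩, rfl⟩
  apply Submodule.subset_span
  show SeriesBirecurrent (revLin p)
  have hrevp : (revLin p : List A → ℚ) = seriesRev p := rfl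
  constructor
  · rw [hrevp]
    have : seriesRev p = rshift v.reverse q := by
      rw [← hv, seriesRev_shiftOp_seriesRev]
    rw [this]
    exact recurrent_rshift hqrec v.reverse
  · rw [hrevp, seriesRev_seriesRev]
    exact hprec

end AuxProof

/-- **Proposition.** Let `S ∈ ℚ⟨⟨A⟩⟩` be a rational series with a finite set of
coefficients.  If `S` is completely reducible, then `S` is a linear combination over
`ℚ` of birecurrent series. -/
theorem completelyReducible_series_linear_combination {A : Type*} [Fintype A]
    (σ : List A → ℚ) (hrat : SeriesRecognizable σ)
    (hcr : CompletelyReducibleSeries σ) :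
    ∃ (n : ℕ) (c : Fin n → ℚ) (T : Fin n → (List A → ℚ)),
      (∀ i, SeriesBirecurrent (T i)) ∧ σ = ∑ i, c i • T i := by
  classical
  obtain ⟨m, W, hW, hind, hsup⟩ := hcr
  -- decompose σ into components of the irreducible subspaces
  have hσsup : σ ∈ ⨆ i, W i := by rw [hsup]; exact mem_synSpace_self σ
  set P : Submodule ℚ (List A → ℚ) :=
    { carrier := {x | ∃ f : Fin m → (List A → ℚ), (∀ i, f i ∈ W i) ∧ x = ∑ i, f i}
      add_mem' := by
        rintro x y ⟨f, hf, rfl⟩ ⟨g, hg, rfl⟩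
        exact ⟨f + g, fun i => Submodule.add_mem _ (hf i) (hg i), by
          simp [Finset.sum_add_distrib]⟩
      zero_mem' := ⟨0, fun i => Submodule.zero_mem _, by simp⟩
      smul_mem' := by
        rintro c x ⟨f, hf, rfl⟩
        exact ⟨c • f, fun i => Submodule.smul_mem _ _ (hf i), by
          simp [Finset.smul_sum]⟩ } with hP
  have hsupP : (⨆ i, W i) ≤ P := by
    refine iSup_le (fun j x hx => ?_)
    refine ⟨Pi.single j x, fun i => ?_, by rw [Finset.sum_pi_single']; simp⟩
    by_cases hij : i = j
    · subst hij; simp [Pi.single_eq_same, hx]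
    · simp [Pi.single_eq_of_ne hij]
  obtain ⟨f, hf, hfs⟩ := hsupP hσsup
  -- independence: components of zero are zero
  have hzero : ∀ x : Fin m → (List A → ℚ), (∀ i, x i ∈ W i) → ∑ i, x i = 0 →
      ∀ i, x i = 0 := by
    intro x hx hsum i
    have h1 : x i + ∑ j ∈ Finset.univ.erase i, x j = 0 := by
      rw [Finset.add_sum_erase _ x (Finset.mem_univ i)]; exact hsum
    have h2 : x i ∈ ⨆ (j) (_ : j ≠ i), W j := by
      have : x i = -∑ j ∈ Finset.univ.erase i, x j := by linear_combination (norm := abel) h1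
      rw [this]
      refine Submodule.neg_mem _ (Submodule.sum_mem _ (fun j hj => ?_))
      exact Submodule.mem_iSup_of_mem j
        (Submodule.mem_iSup_of_mem (Finset.ne_of_mem_erase hj) (hx j))
    exact Submodule.disjoint_def.mp (hind i) _ (hx i) h2
  -- each component is in the span of birecurrent series
  have hcomp : ∀ i, f i ∈ Submodule.span ℚ {T : List A → ℚ | SeriesBirecurrent T} := by
    intro i
    by_cases h0 : f i = 0
    · rw [h0]; exact Submodule.zero_mem _
    have hrec_i : SeriesRecognizable (f i) := by
      refine finite_range_factor hrat (fun a b hab => ?_)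
      have hx : ∀ j, shiftOp a (f j) - shiftOp b (f j) ∈ W j := fun j =>
        Submodule.sub_mem _ ((hW j).2.1 _ (hf j) a) ((hW j).2.1 _ (hf j) b)
      have hsum : ∑ j, (shiftOp a (f j) - shiftOp b (f j)) = 0 := by
        have ha : shiftOp a σ = ∑ j, shiftOp a (f j) := by rw [hfs, map_sum]
        have hb : shiftOp b σ = ∑ j, shiftOp b (f j) := by rw [hfs, map_sum]
        rw [Finset.sum_sub_distrib, ← ha, ← hb, hab, sub_self]
      have := hzero _ hx hsum i
      exact sub_eq_zero.mp this
    obtain ⟨hle, hinv, hIrr⟩ := hW i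
    have hsyn_le : synSpace (f i) ≤ W i := synSpace_le_of_mem hinv (hf i)
    have hsyn_eq : synSpace (f i) = W i := by
      rcases hIrr.2 (synSpace (f i)) hsyn_le (invariant_synSpace _) with h | h
      · exact absurd (h ▸ mem_synSpace_self (f i)) (by simpa using h0)
      · exact h
    have hirr_i : IrrSyn (f i) := by
      intro g hg hg0
      have hgW : g ∈ W i := hsyn_eq ▸ hg
      have hle' : synSpace g ≤ W i := synSpace_le_of_mem hinv hgW
      rcases hIrr.2 (synSpace g) hle' (invariant_synSpace _) with h | h
      · exact absurd (h ▸ mem_synSpace_self g) (by simpa using hg0)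
      · rw [h, hsyn_eq]
    exact mem_birec_span _ hrec_i hirr_i
  have hσmem : σ ∈ Submodule.span ℚ {T : List A → ℚ | SeriesBirecurrent T} := by
    rw [hfs]
    exact Submodule.sum_mem _ (fun i _ => hcomp i)
  -- convert span membership into a finite linear combination
  obtain ⟨c, hsupp, hsum⟩ := Submodule.mem_span_set.mp hσmem
  set e : Fin c.support.card ≃ c.support := c.support.equivFin.symm with he
  refine ⟨c.support.card, fun i => c (e i : List A → ℚ), fun i => (e i : List A → ℚ),
    fun i => hsupp (e i).2, ?_⟩
  rw [← hsum, Finsupp.sum]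
  rw [← Finset.sum_coe_sort c.support (fun x => c x • (x : List A → ℚ))]
  exact (Equiv.sum_comp e (fun x : c.support => c (x : List A → ℚ) • (x : List A → ℚ))).symm
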